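/- arXiv:2603.28946 — 2 statements merged into one kernel-verified Lean document; each statement's English description precedes it below -/
import Mathlib

section
/- In the calculus TZ_Σ, a cut whose cut formula A⊗B is principal on both sides — introduced by ⊗R from Γ ⊢ A and Δ ⊢ B, and by ⊗L from Θ, ⟨z:A⟩, ⟨z:B⟩ ⊢ C — reduces to two successive cuts on the strictly smaller formulas A and B, yielding a derivation of Γ, Δ, Θ ⊢ C. -/
/-- Tensorial formulas: atoms, the unit `I`, and tensor `⊗`. -/
inductive Formula (At : Type) where
  | atom : At → Formula At
  | unit : Formula At
  | tensor : Formula At → Formula At → Formula At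

variable {Z At : Type}

/-- The tensorial zone calculus `TZ_Σ` over a subexponential signature with
weakening class `W` and contraction class `C`, including the cut rule.
Contexts are multisets of zone-labelled formulas, so exchange is implicit. -/
inductive Deriv (W C : Set Z) : Multiset (Z × Formula At) → Formula At → Prop where
  | ax (z : Z) (A : Formula At) : Deriv W C {(z, A)} A
  | unitR : Deriv W C 0 Formula.unit
  | tensorR {Γ Δ A B} : Deriv W C Γ A → Deriv W C Δ B →
      Deriv W C (Γ + Δ) (Formula.tensor A B)
  | tensorL {Γ z A B F} : Deriv W C ((z, A) ::ₘ (z, B) ::ₘ Γ) F →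
      Deriv W C ((z, Formula.tensor A B) ::ₘ Γ) F
  | unitL {Γ z F} : Deriv W C Γ F → Deriv W C ((z, Formula.unit) ::ₘ Γ) F
  | cut {Γ Δ z A B} : Deriv W C Γ A → Deriv W C ((z, A) ::ₘ Δ) B →
      Deriv W C (Γ + Δ) B
  | weak {Γ z A B} : z ∈ W → Deriv W C Γ B → Deriv W C ((z, A) ::ₘ Γ) B
  | contr {Γ z A B} : z ∈ C → Deriv W C ((z, A) ::ₘ (z, A) ::ₘ Γ) B →
      Deriv W C ((z, A) ::ₘ Γ) B


/-- principal tensor cut reduction: a cut whose cut formula `A ⊗ B`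
is principal on both sides — introduced by `⊗R` from `Γ ⊢ A` and `Δ ⊢ B`, and by
`⊗L` from `Θ, ⟨z:A⟩, ⟨z:B⟩ ⊢ F` — reduces to two successive cuts on the strictly
smaller formulas `A` and `B`, yielding a derivation of `Γ, Δ, Θ ⊢ F`. -/
theorem principal_tensor_cut (W C : Set Z) {Γ Δ Θ : Multiset (Z × Formula At)}
    {A B F : Formula At} (z : Z)
    (d1 : Deriv W C Γ A) (d2 : Deriv W C Δ B)
    (d3 : Deriv W C ((z, A) ::ₘ (z, B) ::ₘ Θ) F) :
    Deriv W C (Γ + Δ + Θ) F := by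
  have h1 : Deriv W C (Γ + ((z, B) ::ₘ Θ)) F := Deriv.cut d1 d3
  rw [show Γ + ((z, B) ::ₘ Θ) = (z, B) ::ₘ (Γ + Θ) by
    simp [Multiset.cons_add, add_comm]] at h1
  have h2 : Deriv W C (Δ + (Γ + Θ)) F := Deriv.cut d2 h1
  rwa [show Δ + (Γ + Θ) = Γ + Δ + Θ by simp [add_comm, add_assoc, add_left_comm]] at h2
end

section
/- For every derivation π of a sequent Γ ⊢ A in the extracted calculus TZ_{Σ_Lic}, there exists a morphism ⟦π⟧ : ⟦Γ⟧ → Out(A) in the architectural category Arch_{Ẑ} that belongs to the licensed diagram class Diag_Lic; moreover derivations ending in W_z are interpreted using the licensed discard family ω_{z,−} and derivations ending in C_z are interpreted using the licensed diagonal family δ_{z,−}. -/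
open CategoryTheory MonoidalCategory

universe v u

variable {Z At O : Type}
variable {A : Type u} [Category.{v} A] [MonoidalCategory A] [SymmetricCategory A]

/-- The semantic data of a coherently disciplined architecture over the extended
zone set `Ẑ = Z ⊔ {o}` (here `Option Z`, with `none` the fresh output zone `o`):
the one-zone embeddings `J`, the interpretation of atoms, products and terminal
object of `Ctx`, the zone preorder with its coercions, the licensed discards and
diagonals, and the canonical semantic interface blocks. -/
structure Discipline (Z At O : Type) (A : Type u) [Category.{v} A]
    [MonoidalCategory A] where
  J : Option Z → O → A
  rho : At → O
  pO : O → O → O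
  oneO : O
  le : Z → Z → Prop
  W : Set Z
  Cz : Set Z
  chi : ∀ {z z' : Z}, le z z' → ∀ X : O, J (some z) X ⟶ J (some z') X
  omega : ∀ {z : Z}, z ∈ W → ∀ X : O, J (some z) X ⟶ 𝟙_ A
  delta : ∀ {z : Z}, z ∈ Cz → ∀ X : O, J (some z) X ⟶ J (some z) X ⊗ J (some z) X
  readout : ∀ (z : Z) (X : O), J (some z) X ⟶ J none X
  input : ∀ (z : Z) (X : O), J none X ⟶ J (some z) X
  tauOut : ∀ X Y : O, J none X ⊗ J none Y ⟶ J none (pO X Y)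
  muDec : ∀ (z : Z) (X Y : O), J (some z) (pO X Y) ⟶ J (some z) X ⊗ J (some z) Y
  etaOut : 𝟙_ A ⟶ J none oneO
  nuDis : ∀ z : Z, J (some z) oneO ⟶ 𝟙_ A

variable (D : Discipline Z At O A)

/-- Interpretation of formulas: `⟦p⟧ = ρ(p)`, `⟦I⟧ = 1`, `⟦A⊗B⟧ = ⟦A⟧ × ⟦B⟧`. -/
def semF : Formula At → O
  | Formula.atom p => D.rho p
  | Formula.unit => D.oneO
  | Formula.tensor F G => D.pO (semF F) (semF G)

/-- Interpretation of a zone context as the tensor of the `J_{zᵢ}(⟦Aᵢ⟧)`. -/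
def interpCtx : List (Z × Formula At) → A
  | [] => 𝟙_ A
  | (z, F) :: Γ => D.J (some z) (semF D F) ⊗ interpCtx Γ

/-- The output object `Out(A) = J_o(⟦A⟧)`. -/
def Out (F : Formula At) : A := D.J none (semF D F)

/-- The licensed diagram class `Diag_Lic`: the smallest class of morphisms of
`Arch_{Ẑ}` containing identities and the monoidal structural isomorphisms, the
canonical interface blocks, the licensed coercions, discards and diagonals, and
closed under composition and tensor product. -/
inductive Diag : ∀ {X Y : A}, (X ⟶ Y) → Prop where
  | id (X : A) : Diag (𝟙 X)
  | assocHom (X Y Z' : A) : Diag (α_ X Y Z').hom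
  | assocInv (X Y Z' : A) : Diag (α_ X Y Z').inv
  | leftUnitorHom (X : A) : Diag (λ_ X).hom
  | leftUnitorInv (X : A) : Diag (λ_ X).inv
  | rightUnitorHom (X : A) : Diag (ρ_ X).hom
  | rightUnitorInv (X : A) : Diag (ρ_ X).inv
  | braiding (X Y : A) : Diag (β_ X Y).hom
  | readout (z X) : Diag (D.readout z X)
  | input (z X) : Diag (D.input z X)
  | tauOut (X Y) : Diag (D.tauOut X Y)
  | muDec (z X Y) : Diag (D.muDec z X Y)
  | etaOut : Diag D.etaOut
  | nuDis (z) : Diag (D.nuDis z)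
  | chi {z z'} (h : D.le z z') (X) : Diag (D.chi h X)
  | omega {z} (h : z ∈ D.W) (X) : Diag (D.omega h X)
  | delta {z} (h : z ∈ D.Cz) (X) : Diag (D.delta h X)
  | comp {X Y Z' : A} {f : X ⟶ Y} {g : Y ⟶ Z'} : Diag f → Diag g → Diag (f ≫ g)
  | tensor {X X' Y Y' : A} {f : X ⟶ Y} {g : X' ⟶ Y'} :
      Diag f → Diag g → Diag (f ⊗ₘ g)

/-- The extracted calculus `TZ_{Σ_Lic}` on list contexts, with an explicit
exchange rule (contexts are multisets up to permutation). -/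
inductive DerivL (W C : Set Z) : List (Z × Formula At) → Formula At → Prop where
  | exch {Γ Γ' F} : Γ.Perm Γ' → DerivL W C Γ F → DerivL W C Γ' F
  | ax (z F) : DerivL W C [(z, F)] F
  | unitR : DerivL W C [] Formula.unit
  | unitL {Γ z F} : DerivL W C Γ F → DerivL W C ((z, Formula.unit) :: Γ) F
  | tensorR {Γ Δ F G} : DerivL W C Γ F → DerivL W C Δ G →
      DerivL W C (Γ ++ Δ) (Formula.tensor F G)
  | tensorL {Γ z F G H} : DerivL W C ((z, F) :: (z, G) :: Γ) H →
      DerivL W C ((z, Formula.tensor F G) :: Γ) H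
  | cut {Γ Δ z F G} : DerivL W C Γ F → DerivL W C ((z, F) :: Δ) G →
      DerivL W C (Γ ++ Δ) G
  | weak {Γ z F G} : z ∈ W → DerivL W C Γ G → DerivL W C ((z, F) :: Γ) G
  | contr {Γ z F G} : z ∈ C → DerivL W C ((z, F) :: (z, F) :: Γ) G →
      DerivL W C ((z, F) :: Γ) G

/-!
Each rule of the calculus is interpreted by a diagram assembled from the generators of `Diag_Lic`:
the axiom by the readout `r`, `I_R` and `I_L` by the unit blocks `η` and `ν`, `⊗_R` and `⊗_L` by
`τ` and `μ`, cut by the input block `ι`, and `W_z`, `C_z` by the licensed discards `ω` and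
diagonals `δ`. The structural isomorphisms re-bracket the list contexts, and exchange is
interpreted by composing braidings of adjacent factors.
-/

section

variable {D}

namespace Diag

theorem tensor_id {X Y : A} {f : X ⟶ Y} (hf : Diag D f) (T : A) : Diag D (f ⊗ₘ 𝟙 T) :=
  hf.tensor (Diag.id T)

theorem id_tensor {X Y : A} {f : X ⟶ Y} (hf : Diag D f) (T : A) : Diag D (𝟙 T ⊗ₘ f) :=
  (Diag.id T).tensor hf

theorem discard_comp {X Y T : A} {d : X ⟶ 𝟙_ A} {s : Y ⟶ T} (hd : Diag D d) (hs : Diag D s) :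
    Diag D ((d ⊗ₘ 𝟙 Y) ≫ (λ_ Y).hom ≫ s) :=
  (hd.tensor_id Y).comp ((leftUnitorHom Y).comp hs)

theorem split_comp {X X₁ X₂ Y T : A} {d : X ⟶ X₁ ⊗ X₂} {s : X₁ ⊗ X₂ ⊗ Y ⟶ T}
    (hd : Diag D d) (hs : Diag D s) :
    Diag D ((d ⊗ₘ 𝟙 Y) ≫ (α_ X₁ X₂ Y).hom ≫ s) :=
  (hd.tensor_id Y).comp ((assocHom X₁ X₂ Y).comp hs)

theorem swap_head (X Y T : A) :
    Diag D ((α_ X Y T).inv ≫ ((β_ X Y).hom ⊗ₘ 𝟙 T) ≫ (α_ Y X T).hom) :=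
  (assocInv X Y T).comp (((braiding X Y).tensor_id T).comp (assocHom Y X T))

end Diag

end

theorem exists_diag_interpCtx_of_perm {Γ Γ' : List (Z × Formula At)} (hp : Γ.Perm Γ') :
    ∃ f : interpCtx D Γ ⟶ interpCtx D Γ', Diag D f := by
  induction hp with
  | nil => exact ⟨𝟙 _, .id _⟩
  | cons _ _ ih =>
    obtain ⟨f, hf⟩ := ih
    exact ⟨_, hf.id_tensor _⟩
  | swap => exact ⟨_, .swap_head _ _ _⟩
  | trans _ _ ih₁ ih₂ =>
    obtain ⟨f, hf⟩ := ih₁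
    obtain ⟨g, hg⟩ := ih₂
    exact ⟨f ≫ g, hf.comp hg⟩

theorem exists_diag_interpCtx_append (Γ Δ : List (Z × Formula At)) :
    ∃ f : interpCtx D (Γ ++ Δ) ⟶ interpCtx D Γ ⊗ interpCtx D Δ, Diag D f := by
  induction Γ with
  | nil => exact ⟨(λ_ _).inv, .leftUnitorInv _⟩
  | cons _ _ ih =>
    obtain ⟨f, hf⟩ := ih
    exact ⟨(𝟙 _ ⊗ₘ f) ≫ (α_ _ _ _).inv, (hf.id_tensor _).comp (.assocInv _ _ _)⟩

theorem DerivL.exists_diag {Γ : List (Z × Formula At)} {F : Formula At}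
    (hπ : DerivL D.W D.Cz Γ F) : ∃ h : interpCtx D Γ ⟶ Out D F, Diag D h := by
  induction hπ with
  | exch hp _ ih =>
    obtain ⟨f, hf⟩ := ih
    obtain ⟨g, hg⟩ := exists_diag_interpCtx_of_perm D hp.symm
    exact ⟨g ≫ f, hg.comp hf⟩
  | ax z F => exact ⟨(ρ_ _).hom ≫ D.readout z _, (Diag.rightUnitorHom _).comp (.readout _ _)⟩
  | unitR => exact ⟨D.etaOut, .etaOut⟩
  | unitL _ ih =>
    obtain ⟨f, hf⟩ := ih
    exact ⟨_, (Diag.nuDis _).discard_comp hf⟩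
  | tensorR _ _ ih₁ ih₂ =>
    obtain ⟨f, hf⟩ := ih₁
    obtain ⟨g, hg⟩ := ih₂
    obtain ⟨s, hs⟩ := exists_diag_interpCtx_append D _ _
    exact ⟨s ≫ (f ⊗ₘ g) ≫ D.tauOut _ _, hs.comp ((hf.tensor hg).comp (.tauOut _ _))⟩
  | tensorL _ ih =>
    obtain ⟨f, hf⟩ := ih
    exact ⟨_, (Diag.muDec _ _ _).split_comp hf⟩
  | @cut Γ Δ z _ _ _ _ ih₁ ih₂ =>
    obtain ⟨f, hf⟩ := ih₁
    obtain ⟨g, hg⟩ := ih₂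
    obtain ⟨s, hs⟩ := exists_diag_interpCtx_append D Γ Δ
    exact ⟨s ≫ ((f ≫ D.input z _) ⊗ₘ 𝟙 _) ≫ g,
      hs.comp (((hf.comp (.input _ _)).tensor_id _).comp hg)⟩
  | weak hz _ ih =>
    obtain ⟨f, hf⟩ := ih
    exact ⟨_, (Diag.omega hz _).discard_comp hf⟩
  | contr hz _ ih =>
    obtain ⟨f, hf⟩ := ih
    exact ⟨_, (Diag.delta hz _).split_comp hf⟩

/-- soundness of the extracted calculus: every derivation of
`Γ ⊢ A` in `TZ_{Σ_Lic}` is interpreted by a morphism `⟦Γ⟧ ⟶ Out(A)` lying in the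
licensed diagram class `Diag_Lic`; moreover weakening steps `W_z` are interpreted
using the licensed discard family `ω_{z,-}` and contraction steps `C_z` using the
licensed diagonal family `δ_{z,-}`: whenever the premise of such a step has an
interpretation in `Diag_Lic`, the canonical interpretation of its conclusion built
from `ω_{z,-}` (resp. `δ_{z,-}`) again lies in `Diag_Lic`. -/
theorem soundness :
    (∀ (Γ : List (Z × Formula At)) (F : Formula At),
      DerivL D.W D.Cz Γ F → ∃ h : interpCtx D Γ ⟶ Out D F, Diag D h) ∧
    (∀ (z : Z) (hz : z ∈ D.W) (FA FB : Formula At) (Γ : List (Z × Formula At))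
      (s : interpCtx D Γ ⟶ Out D FB), Diag D s →
      Diag D ((D.omega hz (semF D FA) ⊗ₘ 𝟙 (interpCtx D Γ)) ≫
        (λ_ (interpCtx D Γ)).hom ≫ s :
          interpCtx D ((z, FA) :: Γ) ⟶ Out D FB)) ∧
    (∀ (z : Z) (hz : z ∈ D.Cz) (FA FB : Formula At) (Γ : List (Z × Formula At))
      (s : interpCtx D ((z, FA) :: (z, FA) :: Γ) ⟶ Out D FB), Diag D s →
      Diag D ((D.delta hz (semF D FA) ⊗ₘ 𝟙 (interpCtx D Γ)) ≫
        (α_ (D.J (some z) (semF D FA)) (D.J (some z) (semF D FA))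
          (interpCtx D Γ)).hom ≫ s :
          interpCtx D ((z, FA) :: Γ) ⟶ Out D FB)) :=
  ⟨fun _ _ hπ => hπ.exists_diag D,
    fun _ hz _ _ _ _ hs => (Diag.omega hz _).discard_comp hs,
    fun _ hz _ _ _ _ hs => (Diag.delta hz _).split_comp hs⟩
end
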